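/- arXiv:1905.07018 — 5 statements merged into one kernel-verified Lean document; each statement's English description precedes it below -/
import Mathlib

section
/- Per-iteration contraction of the inexact proximal online gradient step (Lemma 1): Let E be a real inner product space, let f : E → ℝ be L-smooth with μ-strongly monotone gradient, let α ≥ 0 with μ ≤ L, and set ρ := √(1 + α²L² − 2αμ). Let P : E → E be nonexpansive and let x⋆ ∈ E satisfy P(x⋆ − α∇f(x⋆)) = x⋆. Then for any x, e, ε ∈ E, the point x⁺ := P(x − α(∇f(x) + e)) + ε satisfies ‖x⁺ − x⋆‖ ≤ ρ‖x − x⋆‖ + ‖ε‖ + α‖e‖. -/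
open RealInnerProductSpace

/-- `f` has gradient `g` at `x` (stated via the Fréchet derivative and the
canonical map to the dual, so that completeness of `E` is not needed). -/
def HasGradAt {E : Type*} [NormedAddCommGroup E] [InnerProductSpace ℝ E]
    (f : E → ℝ) (g : E) (x : E) : Prop :=
  HasFDerivAt f (InnerProductSpace.toDualMap ℝ E g) x

/-- Per-iteration contraction of the inexact proximal online gradient step (Lemma 1). -/
theorem inexact_prox_ogd_contraction
    {E : Type*} [NormedAddCommGroup E] [InnerProductSpace ℝ E]
    (f : E → ℝ) (f' : E → E) (L μ α : ℝ)
    (hdiff : ∀ x, HasGradAt f (f' x) x)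
    (hsmooth : ∀ x y, ‖f' x - f' y‖ ≤ L * ‖x - y‖)
    (hmono : ∀ x y, ⟪f' x - f' y, x - y⟫ ≥ μ * ‖x - y‖ ^ 2)
    (hα : 0 ≤ α) (hμL : μ ≤ L)
    (P : E → E) (hP : ∀ x y, ‖P x - P y‖ ≤ ‖x - y‖)
    (xstar : E) (hfix : P (xstar - α • f' xstar) = xstar)
    (x e ε : E) :
    ‖(P (x - α • (f' x + e)) + ε) - xstar‖ ≤
      Real.sqrt (1 + α ^ 2 * L ^ 2 - 2 * α * μ) * ‖x - xstar‖ + ‖ε‖ + α * ‖e‖ := by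
  set d := x - xstar with hd
  set g := f' x - f' xstar with hg
  have hC : 0 ≤ 1 + α ^ 2 * L ^ 2 - 2 * α * μ := by
    rcases le_or_gt μ 0 with h | h
    · nlinarith [sq_nonneg (α * L), mul_nonneg hα (neg_nonneg.2 h)]
    · nlinarith [sq_nonneg (1 - α * μ), mul_nonneg (mul_nonneg (sq_nonneg α)
        (sub_nonneg.2 hμL)) (by linarith : (0:ℝ) ≤ L + μ)]
  have hkey : ‖(x - α • f' x) - (xstar - α • f' xstar)‖ ≤
      Real.sqrt (1 + α ^ 2 * L ^ 2 - 2 * α * μ) * ‖d‖ := by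
    have h1 : (x - α • f' x) - (xstar - α • f' xstar) = d - α • g := by
      rw [hd, hg, smul_sub]; abel
    rw [h1]
    have hip : ⟪g, d⟫ ≥ μ * ‖d‖ ^ 2 := hmono x xstar
    have hn : ‖g‖ ≤ L * ‖d‖ := hsmooth x xstar
    have hn2 : ‖g‖ ^ 2 ≤ L ^ 2 * ‖d‖ ^ 2 := by nlinarith [norm_nonneg g]
    have hsq : ‖d - α • g‖ ^ 2 ≤ (1 + α ^ 2 * L ^ 2 - 2 * α * μ) * ‖d‖ ^ 2 := by
      rw [norm_sub_sq_real, real_inner_smul_right, norm_smul, Real.norm_eq_abs,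
        abs_of_nonneg hα, mul_pow]
      nlinarith [mul_nonneg hα (sub_nonneg.2 hip.le), real_inner_comm d g]
    calc ‖d - α • g‖ = Real.sqrt (‖d - α • g‖ ^ 2) := by
          rw [Real.sqrt_sq (norm_nonneg _)]
      _ ≤ Real.sqrt ((1 + α ^ 2 * L ^ 2 - 2 * α * μ) * ‖d‖ ^ 2) :=
          Real.sqrt_le_sqrt hsq
      _ = Real.sqrt (1 + α ^ 2 * L ^ 2 - 2 * α * μ) * ‖d‖ := by
          rw [Real.sqrt_mul hC, Real.sqrt_sq (norm_nonneg _)]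
  have h2 : ‖(x - α • (f' x + e)) - (xstar - α • f' xstar)‖ ≤
      Real.sqrt (1 + α ^ 2 * L ^ 2 - 2 * α * μ) * ‖d‖ + α * ‖e‖ := by
    have h3 : (x - α • (f' x + e)) - (xstar - α • f' xstar) =
        ((x - α • f' x) - (xstar - α • f' xstar)) + (-(α • e)) := by
      rw [smul_add]; abel
    rw [h3]
    calc ‖_ + -(α • e)‖ ≤ ‖(x - α • f' x) - (xstar - α • f' xstar)‖ + ‖-(α • e)‖ :=
          norm_add_le _ _
      _ ≤ Real.sqrt (1 + α ^ 2 * L ^ 2 - 2 * α * μ) * ‖d‖ + α * ‖e‖ := by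
          rw [norm_neg, norm_smul, Real.norm_eq_abs, abs_of_nonneg hα]
          linarith
  calc ‖(P (x - α • (f' x + e)) + ε) - xstar‖
      = ‖(P (x - α • (f' x + e)) - P (xstar - α • f' xstar)) + ε‖ := by
        rw [hfix]; congr 1; abel
    _ ≤ ‖P (x - α • (f' x + e)) - P (xstar - α • f' xstar)‖ + ‖ε‖ := norm_add_le _ _
    _ ≤ ‖(x - α • (f' x + e)) - (xstar - α • f' xstar)‖ + ‖ε‖ := by
        linarith [hP (x - α • (f' x + e)) (xstar - α • f' xstar)]
    _ ≤ Real.sqrt (1 + α ^ 2 * L ^ 2 - 2 * α * μ) * ‖d‖ + α * ‖e‖ + ‖ε‖ := by linarith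
    _ = _ := by ring
end

section
/- Cumulative tracking-error bound (Corollary 1): Let E be a normed real vector space, let ρ ∈ (0,1), let (x_k)_{k≥0} and (y_k)_{k≥0} be sequences in E, and let (δ_k)_{k≥0} be a sequence of nonnegative reals such that ‖x_{k+1} − y_k‖ ≤ ρ‖x_k − y_k‖ + δ_k for all 0 ≤ k ≤ K. Then ∑_{k=1}^{K} ‖x_k − y_k‖ ≤ (ρ/(1−ρ))·‖x_0 − y_0‖ + (1/(1−ρ))·∑_{k=1}^{K} ‖y_k − y_{k−1}‖ + (1/(1−ρ))·∑_{k=0}^{K} δ_k. -/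
/-- Cumulative tracking-error bound (Corollary 1). -/
theorem cumulative_tracking_error_bound
    {E : Type*} [NormedAddCommGroup E] [NormedSpace ℝ E]
    (ρ : ℝ) (hρ : ρ ∈ Set.Ioo (0 : ℝ) 1)
    (x y : ℕ → E) (δ : ℕ → ℝ) (hδ : ∀ k, 0 ≤ δ k) (K : ℕ)
    (hrec : ∀ k ≤ K, ‖x (k + 1) - y k‖ ≤ ρ * ‖x k - y k‖ + δ k) :
    ∑ k ∈ Finset.Icc 1 K, ‖x k - y k‖ ≤
      (ρ / (1 - ρ)) * ‖x 0 - y 0‖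
        + (1 / (1 - ρ)) * ∑ k ∈ Finset.Icc 1 K, ‖y k - y (k - 1)‖
        + (1 / (1 - ρ)) * ∑ k ∈ Finset.Icc 0 K, δ k := by
  obtain ⟨hρ0, hρ1⟩ := hρ
  have h1ρ : (0:ℝ) < 1 - ρ := by linarith
  set a : ℕ → ℝ := fun k => ‖x k - y k‖ with ha
  set S := ∑ k ∈ Finset.Icc 1 K, a k with hS
  set B := ∑ k ∈ Finset.Icc 1 K, ‖y k - y (k - 1)‖ with hB
  set D := ∑ k ∈ Finset.Icc 0 K, δ k with hD
  have hanon : ∀ k, 0 ≤ a k := fun k => norm_nonneg _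
  have hBnon : 0 ≤ B := Finset.sum_nonneg fun _ _ => norm_nonneg _
  have hDnon : 0 ≤ D := Finset.sum_nonneg fun i _ => hδ i
  have key : S ≤ ρ * a 0 + ρ * S + B + D := by
    have hSeq : S = ∑ i ∈ Finset.range K, a (1 + i) := by
      rw [hS, show Finset.Icc 1 K = Finset.Ico 1 (K+1) from (Finset.Ico_add_one_right_eq_Icc 1 K).symm,
        Finset.sum_Ico_eq_sum_range]
      simp
    have hBeq : B = ∑ i ∈ Finset.range K, ‖y (i + 1) - y i‖ := by
      rw [hB, show Finset.Icc 1 K = Finset.Ico 1 (K+1) from (Finset.Ico_add_one_right_eq_Icc 1 K).symm,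
        Finset.sum_Ico_eq_sum_range]
      simp only [Nat.add_sub_cancel_left]
      apply Finset.sum_congr (by simp)
      intro i _; rw [add_comm 1 i]
    have step : ∀ i ∈ Finset.range K,
        a (1 + i) ≤ ρ * a i + δ i + ‖y (i + 1) - y i‖ := by
      intro i hi
      rw [Finset.mem_range] at hi
      have h := hrec i (le_of_lt hi)
      rw [add_comm 1 i]
      calc a (i + 1) = ‖(x (i + 1) - y i) + (y i - y (i + 1))‖ := by
            rw [ha]; simp only []; congr 1; abel
        _ ≤ ‖x (i + 1) - y i‖ + ‖y i - y (i + 1)‖ := norm_add_le _ _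
        _ ≤ ρ * a i + δ i + ‖y (i + 1) - y i‖ := by
            rw [norm_sub_rev (y i)]; linarith
    have h1 : S ≤ ∑ i ∈ Finset.range K, (ρ * a i + δ i + ‖y (i + 1) - y i‖) := by
      rw [hSeq]; exact Finset.sum_le_sum step
    rw [Finset.sum_add_distrib, Finset.sum_add_distrib, ← Finset.mul_sum, ← hBeq] at h1
    have h2 : ∑ i ∈ Finset.range K, a i ≤ a 0 + S := by
      cases K with
      | zero => simp [hS, hanon 0]
      | succ n =>
        rw [Finset.sum_range_succ' a n, hSeq]
        have : ∑ i ∈ Finset.range n, a (i + 1) ≤ ∑ i ∈ Finset.range (n+1), a (1 + i) := by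
          rw [Finset.sum_range_succ]
          refine le_add_of_le_of_nonneg ?_ (hanon _)
          apply le_of_eq; congr 1; funext i; congr 1; omega
        linarith
    have h3 : ∑ i ∈ Finset.range K, δ i ≤ D := by
      rw [hD]
      have : Finset.Icc 0 K = Finset.range (K + 1) := by
        ext i; simp [Nat.lt_succ_iff]
      rw [this, Finset.sum_range_succ]
      exact le_add_of_nonneg_right (hδ K)
    have := mul_le_mul_of_nonneg_left h2 (le_of_lt hρ0)
    linarith
  have : S * (1 - ρ) ≤ ρ * a 0 + B + D := by nlinarith
  have hfinal : S ≤ (ρ * a 0 + B + D) / (1 - ρ) := by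
    rw [le_div_iff₀ h1ρ]; linarith
  calc S ≤ (ρ * a 0 + B + D) / (1 - ρ) := hfinal
    _ = (ρ / (1 - ρ)) * a 0 + (1 / (1 - ρ)) * B + (1 / (1 - ρ)) * D := by ring
end

section
/- Consensus deviation of proximal images from their average (Lemma 2, inequality (25a)): Let E be a normed real vector space, N ≥ 1, P : E → E nonexpansive, c ≥ 0, and let Q be an N×N real matrix with |Q_{ij} − 1/N| ≤ c for all i, j. Given z^1, …, z^N ∈ E, define y^i := ∑_{j=1}^N Q_{ij} z^j, x^i := P(y^i), and x̄ := (1/N)∑_{i=1}^N x^i. Then ∑_{i=1}^N ‖x̄ − x^i‖ ≤ 2cN·∑_{j=1}^N ‖z^j‖. -/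
/-!
The average of the `x j` is a convex combination of them, so it lies in every closed ball around
`x i` that contains all of them. Since `P` is nonexpansive and any two rows of `Q` differ entrywise
by at most `2 c`, every `‖x k - x i‖` is at most `2 c ∑ ‖z j‖`.
-/

open Finset

theorem norm_average_sub_le {ι E : Type*} [Fintype ι] [SeminormedAddCommGroup E] [NormedSpace ℝ E]
    {x : ι → E} {r : ℝ} (i : ι) (hx : ∀ j, ‖x j - x i‖ ≤ r) :
    ‖(Fintype.card ι : ℝ)⁻¹ • ∑ j, x j - x i‖ ≤ r := by
  have hcard : (Fintype.card ι : ℝ) ≠ 0 := Nat.cast_ne_zero.mpr (Fintype.card_pos_iff.mpr ⟨i⟩).ne'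
  rw [← dist_eq_norm, ← Metric.mem_closedBall, smul_sum]
  refine (convex_closedBall (x i) r).sum_mem (fun _ _ => by positivity) ?_
    fun j _ => mem_closedBall_iff_norm.mpr (hx j)
  simp [hcard]

theorem norm_sum_smul_sub_sum_smul_le {ι E : Type*} [Fintype ι] [SeminormedAddCommGroup E]
    [NormedSpace ℝ E] {a b : ι → ℝ} {d : ℝ} (z : ι → E) (hab : ∀ j, |a j - b j| ≤ d) :
    ‖∑ j, a j • z j - ∑ j, b j • z j‖ ≤ d * ∑ j, ‖z j‖ := by
  rw [← sum_sub_distrib, mul_sum]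
  refine (norm_sum_le _ _).trans (sum_le_sum fun j _ => ?_)
  rw [← sub_smul, norm_smul, Real.norm_eq_abs]
  exact mul_le_mul_of_nonneg_right (hab j) (norm_nonneg _)

theorem consensus_deviation_prox_images_general
    {E : Type*} [NormedAddCommGroup E] [NormedSpace ℝ E]
    (N : ℕ)
    (P : E → E) (hP : ∀ x y, ‖P x - P y‖ ≤ ‖x - y‖)
    (c : ℝ)
    (Q : Fin N → Fin N → ℝ) (hQ : ∀ i j, |Q i j - 1 / N| ≤ c)
    (z y x : Fin N → E)
    (hy : ∀ i, y i = ∑ j, Q i j • z j)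
    (hx : ∀ i, x i = P (y i)) :
    ∑ i, ‖(N : ℝ)⁻¹ • (∑ j, x j) - x i‖ ≤ 2 * c * N * ∑ j, ‖z j‖ := by
  have hrows : ∀ k i j, |Q k j - Q i j| ≤ 2 * c := fun k i j => by
    linarith [abs_sub_le (Q k j) (1 / N) (Q i j), hQ k j, abs_sub_comm (1 / (N : ℝ)) (Q i j),
      hQ i j]
  have hspread : ∀ k i, ‖x k - x i‖ ≤ 2 * c * ∑ j, ‖z j‖ := fun k i => by
    rw [hx, hx, hy, hy]
    exact (hP _ _).trans (norm_sum_smul_sub_sum_smul_le z (hrows k i))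
  calc ∑ i, ‖(N : ℝ)⁻¹ • (∑ j, x j) - x i‖
      ≤ ∑ _i : Fin N, 2 * c * ∑ j, ‖z j‖ :=
        sum_le_sum fun i _ => by simpa using norm_average_sub_le i (hspread · i)
    _ = 2 * c * N * ∑ j, ‖z j‖ := by
      rw [sum_const, card_univ, Fintype.card_fin, nsmul_eq_mul]; ring

/-- Consensus deviation of proximal images from their average (Lemma 2, (25a)). -/
theorem consensus_deviation_prox_images
    {E : Type*} [NormedAddCommGroup E] [NormedSpace ℝ E]
    (N : ℕ) (hN : 1 ≤ N)
    (P : E → E) (hP : ∀ x y, ‖P x - P y‖ ≤ ‖x - y‖)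
    (c : ℝ) (hc : 0 ≤ c)
    (Q : Fin N → Fin N → ℝ) (hQ : ∀ i j, |Q i j - 1 / N| ≤ c)
    (z y x : Fin N → E)
    (hy : ∀ i, y i = ∑ j, Q i j • z j)
    (hx : ∀ i, x i = P (y i)) :
    ∑ i, ‖(N : ℝ)⁻¹ • (∑ j, x j) - x i‖ ≤ 2 * c * N * ∑ j, ‖z j‖ :=
  consensus_deviation_prox_images_general N P hP c Q hQ z y x hy hx
end

section
/- Gradient consensus-error bound: Let E be a real inner product space, N ≥ 1, P : E → E nonexpansive, c ≥ 0, and let Q be an N×N real matrix with |Q_{ij} − 1/N| ≤ c for all i, j. Let f^1, …, f^N : E → ℝ each be L-smooth. Given z^1, …, z^N ∈ E, define y^i := ∑_{j=1}^N Q_{ij} z^j, x^i := P(y^i), and x̄ := (1/N)∑_{i=1}^N x^i. Then ‖(1/N)∑_{i=1}^N (∇f^i(x^i) − ∇f^i(x̄))‖ ≤ 2Lc·∑_{j=1}^N ‖z^j‖. -/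
/-!
Rows of `Q` differ entrywise by at most `2c`, so any two mixed points `y^i, y^j` are within
`2c ∑ ‖z^j‖` of each other; `P` keeps the `x^i` within that distance, and so does their mean
`x̄`, which is a convex combination of them. Smoothness then bounds each gradient difference
by `L · 2c ∑ ‖z^j‖`, and so does their average.
-/

open Finset

section

variable {E : Type*} [SeminormedAddCommGroup E] [NormedSpace ℝ E]

theorem norm_sum_smul_sub_sum_smul_le_s8 {ι : Type*} [Fintype ι] {a b m : ι → ℝ} {c : ℝ}
    (ha : ∀ k, |a k - m k| ≤ c) (hb : ∀ k, |b k - m k| ≤ c) (v : ι → E) :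
    ‖∑ k, a k • v k - ∑ k, b k • v k‖ ≤ 2 * c * ∑ k, ‖v k‖ := by
  rw [← sum_sub_distrib, mul_sum]
  refine (norm_sum_le _ _).trans (sum_le_sum fun k _ => ?_)
  have hab : |a k - b k| ≤ 2 * c := by
    calc |a k - b k| ≤ |a k - m k| + |m k - b k| := abs_sub_le _ _ _
      _ ≤ 2 * c := by linarith [ha k, hb k, abs_sub_comm (m k) (b k)]
  rw [← sub_smul, norm_smul, Real.norm_eq_abs]
  exact mul_le_mul_of_nonneg_right hab (norm_nonneg _)

theorem norm_average_le {ι : Type*} [Fintype ι] {d : ι → E} {r : ℝ} (hr : 0 ≤ r)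
    (hd : ∀ i, ‖d i‖ ≤ r) : ‖(Fintype.card ι : ℝ)⁻¹ • ∑ i, d i‖ ≤ r := by
  rcases (Fintype.card ι).eq_zero_or_pos with hι | hι
  · simpa [hι] using hr
  have hsum : ‖∑ i, d i‖ ≤ Fintype.card ι * r := by
    simpa using (norm_sum_le _ _).trans (sum_le_card_nsmul univ _ r fun i _ => hd i)
  rw [norm_smul, Real.norm_eq_abs, abs_of_nonneg (by positivity), inv_mul_le_iff₀ (by positivity)]
  exact hsum

theorem norm_sub_average_le {ι : Type*} [Fintype ι] {x : ι → E} {r : ℝ} (i : ι)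
    (hx : ∀ j, ‖x i - x j‖ ≤ r) : ‖x i - (Fintype.card ι : ℝ)⁻¹ • ∑ j, x j‖ ≤ r := by
  have : Nonempty ι := ⟨i⟩
  have hcard : (Fintype.card ι : ℝ) ≠ 0 := Nat.cast_ne_zero.mpr Fintype.card_ne_zero
  have hmean : x i - (Fintype.card ι : ℝ)⁻¹ • ∑ j, x j =
      (Fintype.card ι : ℝ)⁻¹ • ∑ j, (x i - x j) := by
    rw [sum_sub_distrib, smul_sub, sum_const, card_univ, ← Nat.cast_smul_eq_nsmul ℝ, smul_smul,
      inv_mul_cancel₀ hcard, one_smul]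
  rw [hmean]
  exact norm_average_le ((norm_nonneg _).trans (hx i)) hx

end

theorem norm_sub_le_mul_of_forall_norm_sub_le {E F : Type*} [SeminormedAddCommGroup E]
    [SeminormedAddCommGroup F] {g : E → F} {L r : ℝ}
    (hg : ∀ x y, ‖g x - g y‖ ≤ L * ‖x - y‖) {x y : E} (hxy : ‖x - y‖ ≤ r) (hLr : 0 ≤ L * r) :
    ‖g x - g y‖ ≤ L * r := by
  rcases le_or_gt 0 L with hL | hL
  · exact (hg x y).trans (mul_le_mul_of_nonneg_left hxy hL)
  · exact (hg x y).trans ((mul_nonpos_of_nonpos_of_nonneg hL.le (norm_nonneg _)).trans hLr)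

theorem gradient_consensus_error_bound_general
    {E : Type*} [NormedAddCommGroup E] [InnerProductSpace ℝ E]
    (N : ℕ)
    (P : E → E) (hP : ∀ x y, ‖P x - P y‖ ≤ ‖x - y‖)
    (c : ℝ) (hc : 0 ≤ c)
    (Q : Fin N → Fin N → ℝ) (hQ : ∀ i j, |Q i j - 1 / N| ≤ c)
    (L : ℝ) (f' : Fin N → E → E)
    (hsmooth : ∀ i x y, ‖f' i x - f' i y‖ ≤ L * ‖x - y‖)
    (z y x : Fin N → E)
    (hy : ∀ i, y i = ∑ j, Q i j • z j)
    (hx : ∀ i, x i = P (y i)) :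
    ‖(N : ℝ)⁻¹ • ∑ i, (f' i (x i) - f' i ((N : ℝ)⁻¹ • ∑ j, x j))‖ ≤
      2 * L * c * ∑ j, ‖z j‖ := by
  set S := ∑ j, ‖z j‖
  -- `L` may be negative (if `E` is trivial), but `L * ‖v‖ ≥ ‖f' j v - f' j 0‖ ≥ 0`.
  have hLS : 0 ≤ L * S := by
    rw [mul_sum]
    exact sum_nonneg fun j _ => by simpa using (norm_nonneg _).trans (hsmooth j (z j) 0)
  have hLr : 0 ≤ L * (2 * c * S) := by
    rw [mul_left_comm]
    exact mul_nonneg (by positivity) hLS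
  have hy_close (i j) : ‖y i - y j‖ ≤ 2 * c * S := by
    rw [hy i, hy j]
    exact norm_sum_smul_sub_sum_smul_le_s8 (hQ i) (hQ j) z
  have hx_close (i j) : ‖x i - x j‖ ≤ 2 * c * S := by
    rw [hx i, hx j]
    exact (hP _ _).trans (hy_close i j)
  have hx_mean (i) : ‖x i - (N : ℝ)⁻¹ • ∑ j, x j‖ ≤ 2 * c * S := by
    simpa using norm_sub_average_le i (hx_close i)
  have hgrad := norm_average_le hLr fun i =>
    norm_sub_le_mul_of_forall_norm_sub_le (hsmooth i) (hx_mean i) hLr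
  rw [Fintype.card_fin] at hgrad
  exact hgrad.trans_eq (by ring)

/-- Gradient consensus-error bound. -/
theorem gradient_consensus_error_bound
    {E : Type*} [NormedAddCommGroup E] [InnerProductSpace ℝ E]
    (N : ℕ) (hN : 1 ≤ N)
    (P : E → E) (hP : ∀ x y, ‖P x - P y‖ ≤ ‖x - y‖)
    (c : ℝ) (hc : 0 ≤ c)
    (Q : Fin N → Fin N → ℝ) (hQ : ∀ i j, |Q i j - 1 / N| ≤ c)
    (L : ℝ) (f : Fin N → E → ℝ) (f' : Fin N → E → E)
    (hdiff : ∀ i x, HasGradAt (f i) (f' i x) x)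
    (hsmooth : ∀ i x y, ‖f' i x - f' i y‖ ≤ L * ‖x - y‖)
    (z y x : Fin N → E)
    (hy : ∀ i, y i = ∑ j, Q i j • z j)
    (hx : ∀ i, x i = P (y i)) :
    ‖(N : ℝ)⁻¹ • ∑ i, (f' i (x i) - f' i ((N : ℝ)⁻¹ • ∑ j, x j))‖ ≤
      2 * L * c * ∑ j, ‖z j‖ :=
  gradient_consensus_error_bound_general N P hP c hc Q hQ L f' hsmooth z y x hy hx
end

section
/- Sampling error bounded by block length times path length: Let E be a normed real vector space, x : ℕ → E, T ≥ 1, R ≥ 1, and let 1 = t_1 < t_2 < ⋯ < t_K ≤ T be integers with t_{k+1} − t_k ≤ R for 1 ≤ k ≤ K−1 and T + 1 − t_K ≤ R. For each 1 ≤ t ≤ T let ⌊t⌋ := max{t_k : t_k ≤ t}. Then ∑_{t=1}^{T} ‖x_{⌊t⌋} − x_t‖ ≤ R·∑_{t=2}^{T} ‖x_t − x_{t−1}‖. -/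
lemma tele_aux {E : Type*} [NormedAddCommGroup E] (x : ℕ → E) (a : ℕ) :
    ∀ s, a ≤ s → ‖x a - x s‖ ≤ ∑ u ∈ Finset.Icc (a + 1) s, ‖x u - x (u - 1)‖ := by
  intro s
  induction s with
  | zero =>
    intro h
    have : a = 0 := Nat.le_zero.mp h
    subst this; simp
  | succ n ih =>
    intro h
    rcases Nat.lt_or_ge n a with h' | h'
    · have : a = n + 1 := by omega
      subst this; simp
    · have key : ‖x a - x (n + 1)‖ ≤ ‖x a - x n‖ + ‖x (n + 1) - x n‖ := by
        have heq : x a - x (n + 1) = (x a - x n) - (x (n + 1) - x n) := by abel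
        rw [heq]
        exact norm_sub_le _ _
      rw [Finset.sum_Icc_succ_top (by omega : a + 1 ≤ n + 1)]
      have := ih h'
      simp only [Nat.add_sub_cancel]
      linarith

/-- Sampling error bounded by block length times path length. -/
theorem sampling_error_le_blocklength_mul_pathlength
    {E : Type*} [NormedAddCommGroup E] [NormedSpace ℝ E]
    (x : ℕ → E) (T R K : ℕ) (hT : 1 ≤ T) (hR : 1 ≤ R) (hK : 1 ≤ K)
    (t : ℕ → ℕ) (ht1 : t 1 = 1)
    (hmono : ∀ k, 1 ≤ k → k < K → t k < t (k + 1))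
    (hlast : t K ≤ T)
    (hgap : ∀ k, 1 ≤ k → k < K → t (k + 1) - t k ≤ R)
    (hgaplast : T + 1 - t K ≤ R)
    (fl : ℕ → ℕ)
    (hfl : ∀ s, 1 ≤ s → s ≤ T →
      ∃ k, 1 ≤ k ∧ k ≤ K ∧ fl s = t k ∧ t k ≤ s ∧
        ∀ k', 1 ≤ k' → k' ≤ K → t k' ≤ s → t k' ≤ t k) :
    ∑ s ∈ Finset.Icc 1 T, ‖x (fl s) - x s‖ ≤
      (R : ℝ) * ∑ s ∈ Finset.Icc 2 T, ‖x s - x (s - 1)‖ := by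
  set f : ℕ → ℝ := fun u => ‖x u - x (u - 1)‖ with hfdef
  have hfnn : ∀ u, 0 ≤ f u := fun u => norm_nonneg _
  have key : ∀ s ∈ Finset.Icc 1 T, 1 ≤ fl s ∧ fl s ≤ s ∧ s + 1 ≤ fl s + R := by
    intro s hs
    rw [Finset.mem_Icc] at hs
    obtain ⟨k, hk1, hkK, hfls, hle, hmax⟩ := hfl s hs.1 hs.2
    have h1 : t 1 ≤ t k := hmax 1 le_rfl hK (by omega)
    refine ⟨by omega, by omega, ?_⟩
    rcases eq_or_lt_of_le hkK with hk | hk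
    · subst hk
      omega
    · have hnext : ¬ t (k + 1) ≤ s := by
        intro hle'
        have h2 := hmax (k + 1) (by omega) (by omega) hle'
        have h3 := hmono k hk1 hk
        omega
      have := hgap k hk1 hk
      have := hmono k hk1 hk
      omega
  calc ∑ s ∈ Finset.Icc 1 T, ‖x (fl s) - x s‖
      ≤ ∑ s ∈ Finset.Icc 1 T, ∑ u ∈ Finset.Icc (fl s + 1) s, f u := by
        apply Finset.sum_le_sum
        intro s hs
        exact tele_aux x (fl s) s (key s hs).2.1
    _ = ∑ s ∈ Finset.Icc 1 T, ∑ u ∈ Finset.Icc 2 T,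
          (if fl s + 1 ≤ u ∧ u ≤ s then f u else 0) := by
        apply Finset.sum_congr rfl
        intro s hs
        obtain ⟨h1, h2, h3⟩ := key s hs
        rw [Finset.mem_Icc] at hs
        rw [← Finset.sum_filter]
        apply Finset.sum_congr _ (fun _ _ => rfl)
        ext u
        simp only [Finset.mem_filter, Finset.mem_Icc]
        omega
    _ = ∑ u ∈ Finset.Icc 2 T, ∑ s ∈ Finset.Icc 1 T,
          (if fl s + 1 ≤ u ∧ u ≤ s then f u else 0) := Finset.sum_comm
    _ ≤ ∑ u ∈ Finset.Icc 2 T, (R : ℝ) * f u := by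
        apply Finset.sum_le_sum
        intro u hu
        rw [Finset.mem_Icc] at hu
        rw [← Finset.sum_filter, Finset.sum_const]
        have hsub : (Finset.Icc 1 T).filter (fun s => fl s + 1 ≤ u ∧ u ≤ s)
            ⊆ Finset.Icc u (u + R - 2) := by
          intro s hsmem
          rw [Finset.mem_filter] at hsmem
          obtain ⟨hsI, hc1, hc2⟩ := hsmem
          have := key s hsI
          rw [Finset.mem_Icc]
          omega
        have hcard : ((Finset.Icc 1 T).filter (fun s => fl s + 1 ≤ u ∧ u ≤ s)).card ≤ R := by
          have := Finset.card_le_card hsub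
          rw [Nat.card_Icc] at this
          omega
        rw [nsmul_eq_mul]
        exact mul_le_mul_of_nonneg_right (by exact_mod_cast hcard) (hfnn u)
    _ = (R : ℝ) * ∑ s ∈ Finset.Icc 2 T, ‖x s - x (s - 1)‖ := by
        rw [Finset.mul_sum]
end
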